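/- arXiv:1501.07815 — 3 statements merged into one kernel-verified Lean document; each statement's English description precedes it below -/
import Mathlib

section
/- Let Σ be a symmetric positive definite r×r matrix, Γ an r×u matrix with orthonormal columns and Γ₀ an r×(r-u) matrix whose columns complete Γ to an orthonormal basis of ℝ^r. Then span(Γ) is a reducing subspace of Σ if and only if Σ = Γ Ω Γᵀ + Γ₀ Ω₀ Γ₀ᵀ for some symmetric positive definite matrices Ω (u×u) and Ω₀ ((r-u)×(r-u)), and in that case Ω = Γᵀ Σ Γ and Ω₀ = Γ₀ᵀ Σ Γ₀. -/
open Matrix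

/- With `P = Γ Γᵀ` and `1 - P = Γ₀ Γ₀ᵀ`, the reducing identity reads
`Sig = Γ (Γᵀ Sig Γ) Γᵀ + Γ₀ (Γ₀ᵀ Sig Γ₀) Γ₀ᵀ`, and the compressions `Γᵀ Sig Γ`, `Γ₀ᵀ Sig Γ₀` of a
positive definite matrix by isometries are positive definite. Conversely, the orthogonality
relations show that compressing `Γ Ω Γᵀ + Γ₀ Ω₀ Γ₀ᵀ` by `Γ` and `Γ₀` recovers `Ω` and `Ω₀`, which
gives both the reducing identity and the uniqueness of `Ω`, `Ω₀`. -/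

namespace Matrix

variable {m n k R : Type*} [Fintype m]

lemma mulVec_injective_of_mul_eq_one [Fintype n] [Semiring R] [DecidableEq n] {A : Matrix n m R}
    {B : Matrix m n R} (h : A * B = 1) : Function.Injective B.mulVec :=
  Function.LeftInverse.injective (g := A.mulVec) fun x => by
    rw [mulVec_mulVec, h, one_mulVec]

lemma PosDef.transpose_mul_mul_of_transpose_mul_self_eq_one [Fintype n] [DecidableEq n]
    [Ring R] [PartialOrder R] [StarRing R] [TrivialStar R]
    {A : Matrix m m R} (hA : A.PosDef) {B : Matrix m n R} (hB : Bᵀ * B = 1) :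
    (Bᵀ * A * B).PosDef := by
  rw [← conjTranspose_eq_transpose_of_trivial]
  exact hA.conjTranspose_mul_mul_same (mulVec_injective_of_mul_eq_one hB)

lemma transpose_mul_eq_zero_symm [CommSemiring R] {A : Matrix m n R}
    {B : Matrix m k R} (h : Aᵀ * B = 0) : Bᵀ * A = 0 := by
  rw [← transpose_transpose A, ← transpose_mul, h, transpose_zero]

lemma transpose_mul_add_mul_eq_left [Fintype n] [Fintype k] [CommSemiring R] [DecidableEq n]
    {Γ : Matrix m n R} {Γ₀ : Matrix m k R} (hΓ : Γᵀ * Γ = 1) (horth : Γᵀ * Γ₀ = 0)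
    (Ω : Matrix n n R) (Ω₀ : Matrix k k R) :
    Γᵀ * (Γ * Ω * Γᵀ + Γ₀ * Ω₀ * Γ₀ᵀ) * Γ = Ω := by
  calc Γᵀ * (Γ * Ω * Γᵀ + Γ₀ * Ω₀ * Γ₀ᵀ) * Γ
      = (Γᵀ * Γ) * Ω * (Γᵀ * Γ) + (Γᵀ * Γ₀) * Ω₀ * (Γ₀ᵀ * Γ) := by
        simp only [Matrix.mul_add, Matrix.add_mul, Matrix.mul_assoc]
    _ = Ω := by rw [hΓ, horth, transpose_mul_eq_zero_symm horth]; simp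

end Matrix

theorem reducing_iff_envelope_decomposition_general {r u : ℕ}
    (Sig : Matrix (Fin r) (Fin r) ℝ) (hSig : Sig.PosDef)
    (Γ : Matrix (Fin r) (Fin u) ℝ) (Γ₀ : Matrix (Fin r) (Fin (r - u)) ℝ)
    (hΓ : Γᵀ * Γ = 1) (hΓ₀ : Γ₀ᵀ * Γ₀ = 1) (horth : Γᵀ * Γ₀ = 0)
    (hcomplete : Γ * Γᵀ + Γ₀ * Γ₀ᵀ = 1) :
    (Sig = (Γ * Γᵀ) * Sig * (Γ * Γᵀ) + (1 - Γ * Γᵀ) * Sig * (1 - Γ * Γᵀ) ↔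
      ∃ (Ω : Matrix (Fin u) (Fin u) ℝ) (Ω₀ : Matrix (Fin (r - u)) (Fin (r - u)) ℝ),
        Ω.PosDef ∧ Ω₀.PosDef ∧ Sig = Γ * Ω * Γᵀ + Γ₀ * Ω₀ * Γ₀ᵀ) ∧
    (∀ (Ω : Matrix (Fin u) (Fin u) ℝ) (Ω₀ : Matrix (Fin (r - u)) (Fin (r - u)) ℝ),
      Ω.PosDef → Ω₀.PosDef → Sig = Γ * Ω * Γᵀ + Γ₀ * Ω₀ * Γ₀ᵀ →
        Ω = Γᵀ * Sig * Γ ∧ Ω₀ = Γ₀ᵀ * Sig * Γ₀) := by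
  have hQ : 1 - Γ * Γᵀ = Γ₀ * Γ₀ᵀ := by rw [← hcomplete, add_sub_cancel_left]
  have compress (Ω : Matrix (Fin u) (Fin u) ℝ) (Ω₀ : Matrix (Fin (r - u)) (Fin (r - u)) ℝ) :
      Γᵀ * (Γ * Ω * Γᵀ + Γ₀ * Ω₀ * Γ₀ᵀ) * Γ = Ω ∧
        Γ₀ᵀ * (Γ * Ω * Γᵀ + Γ₀ * Ω₀ * Γ₀ᵀ) * Γ₀ = Ω₀ :=
    ⟨transpose_mul_add_mul_eq_left hΓ horth Ω Ω₀, by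
      rw [add_comm]
      exact transpose_mul_add_mul_eq_left hΓ₀ (transpose_mul_eq_zero_symm horth) Ω₀ Ω⟩
  have conj_proj {k : ℕ} (A : Matrix (Fin r) (Fin k) ℝ) (S : Matrix (Fin r) (Fin r) ℝ) :
      A * Aᵀ * S * (A * Aᵀ) = A * (Aᵀ * S * A) * Aᵀ := by
    simp only [Matrix.mul_assoc]
  rw [hQ, conj_proj, conj_proj]
  refine ⟨⟨fun h => ⟨_, _, hSig.transpose_mul_mul_of_transpose_mul_self_eq_one hΓ,
    hSig.transpose_mul_mul_of_transpose_mul_self_eq_one hΓ₀, h⟩, ?_⟩, ?_⟩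
  · rintro ⟨Ω, Ω₀, -, -, rfl⟩
    rw [(compress Ω Ω₀).1, (compress Ω Ω₀).2]
  · rintro Ω Ω₀ - - rfl
    exact ⟨(compress Ω Ω₀).1.symm, (compress Ω Ω₀).2.symm⟩

/-- for a symmetric positive definite `Sig`, with `(Γ, Γ₀)` an orthonormal basis
split of `ℝ^r`, `span(Γ)` reduces `Sig` (equivalently, with `P = ΓΓᵀ` the orthogonal projection
onto `span(Γ)`, `Sig = P Sig P + (I-P) Sig (I-P)`) iff `Sig = Γ Ω Γᵀ + Γ₀ Ω₀ Γ₀ᵀ` for some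
symmetric positive definite `Ω`, `Ω₀`; and in that case `Ω = Γᵀ Sig Γ`, `Ω₀ = Γ₀ᵀ Sig Γ₀`. -/
theorem reducing_iff_envelope_decomposition {r u : ℕ}
    (Sig : Matrix (Fin r) (Fin r) ℝ) (hSig : Sig.PosDef) (hSigsymm : Sig.IsSymm)
    (Γ : Matrix (Fin r) (Fin u) ℝ) (Γ₀ : Matrix (Fin r) (Fin (r - u)) ℝ)
    (hΓ : Γᵀ * Γ = 1) (hΓ₀ : Γ₀ᵀ * Γ₀ = 1) (horth : Γᵀ * Γ₀ = 0)
    (hcomplete : Γ * Γᵀ + Γ₀ * Γ₀ᵀ = 1) :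
    (Sig = (Γ * Γᵀ) * Sig * (Γ * Γᵀ) + (1 - Γ * Γᵀ) * Sig * (1 - Γ * Γᵀ) ↔
      ∃ (Ω : Matrix (Fin u) (Fin u) ℝ) (Ω₀ : Matrix (Fin (r - u)) (Fin (r - u)) ℝ),
        Ω.PosDef ∧ Ω₀.PosDef ∧ Sig = Γ * Ω * Γᵀ + Γ₀ * Ω₀ * Γ₀ᵀ) ∧
    (∀ (Ω : Matrix (Fin u) (Fin u) ℝ) (Ω₀ : Matrix (Fin (r - u)) (Fin (r - u)) ℝ),
      Ω.PosDef → Ω₀.PosDef → Sig = Γ * Ω * Γᵀ + Γ₀ * Ω₀ * Γ₀ᵀ →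
        Ω = Γᵀ * Sig * Γ ∧ Ω₀ = Γ₀ᵀ * Sig * Γ₀) :=
  reducing_iff_envelope_decomposition_general Sig hSig Γ Γ₀ hΓ hΓ₀ horth hcomplete
end

section
/- Let J be symmetric positive definite, and let H, K be matrices with span(K) ⊆ span(H). Then H(HᵀJH)⁺Hᵀ − K(KᵀJK)⁺Kᵀ = J^{-1/2}(P_{J^{1/2}H} − P_{J^{1/2}K})J^{-1/2} = J^{-1/2} P_{J^{1/2}H} Q_{J^{1/2}K} J^{-1/2}, and this difference is positive semidefinite. -/
/-! Write `S = J^{1/2}`. The Gram matrix of `S X` is `XᵀJX`, and for any generalized inverse `G`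
of a Gram matrix `AᵀA` the matrix `A G Aᵀ` is the orthogonal projection onto the range of `A`;
hence `X G Xᵀ = S⁻¹ P_{SX} S⁻¹` for `X = H, K`. As `range (S K) ≤ range (S H)`, we get
`P_{SH} P_{SK} = P_{SK}`, so `P_{SH} - P_{SK} = P_{SH} (1 - P_{SK})` is again an orthogonal
projection, hence positive semidefinite, and congruence by `S⁻¹` preserves this. -/

open Matrix

/-- `G` is the Moore–Penrose pseudoinverse of the square matrix `A`. -/
def IsMoorePenroseInv {n : ℕ} (A G : Matrix (Fin n) (Fin n) ℝ) : Prop :=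
  A * G * A = A ∧ G * A * G = G ∧ (A * G)ᵀ = A * G ∧ (G * A)ᵀ = G * A

/-- The positive semidefinite square root of a positive semidefinite matrix (the definition
of `Matrix.PosSemidef.sqrt` in the older Mathlib, which has since been removed). -/
noncomputable def Matrix.PosSemidef.sqrt {n : Type*} [Fintype n] [DecidableEq n]
    {A : Matrix n n ℝ} (hA : A.PosSemidef) : Matrix n n ℝ :=
  (hA.1.eigenvectorUnitary : Matrix n n ℝ) * diagonal ((↑) ∘ (√·) ∘ hA.1.eigenvalues) *
    (star hA.1.eigenvectorUnitary : Matrix n n ℝ)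

namespace Matrix

variable {m n k l : Type*}

section Sqrt

variable [Fintype n] [DecidableEq n] {A : Matrix n n ℝ}

theorem PosSemidef.transpose_sqrt (hA : A.PosSemidef) : hA.sqrtᵀ = hA.sqrt := by
  rw [← conjTranspose_eq_transpose_of_trivial, PosSemidef.sqrt, conjTranspose_mul,
    conjTranspose_mul, diagonal_conjTranspose, ← star_eq_conjTranspose, ← star_eq_conjTranspose,
    star_star, Matrix.mul_assoc]
  congr 3

theorem PosSemidef.sqrt_mul_self (hA : A.PosSemidef) : hA.sqrt * hA.sqrt = A := by
  conv_rhs => rw [hA.1.spectral_theorem, Unitary.conjStarAlgAut_apply]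
  set U : Matrix n n ℝ := (hA.1.eigenvectorUnitary : Matrix n n ℝ)
  have hU : star U * U = 1 := by simp [U]
  calc hA.sqrt * hA.sqrt
      = U * (diagonal ((↑) ∘ (√·) ∘ hA.1.eigenvalues) * (star U * U) *
          diagonal ((↑) ∘ (√·) ∘ hA.1.eigenvalues)) * star U := by
        simp only [PosSemidef.sqrt, U, Matrix.mul_assoc]
    _ = _ := by
        rw [hU, Matrix.mul_one, diagonal_mul_diagonal]
        congr 3
        ext i
        simp [Real.mul_self_sqrt (hA.eigenvalues_nonneg i)]

theorem PosSemidef.transpose_sqrt_mul_mul_sqrt_mul [Fintype k] (hA : A.PosSemidef)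
    (X : Matrix n k ℝ) : (hA.sqrt * X)ᵀ * (hA.sqrt * X) = Xᵀ * A * X := by
  rw [transpose_mul, hA.transpose_sqrt, Matrix.mul_assoc, ← Matrix.mul_assoc hA.sqrt,
    hA.sqrt_mul_self, Matrix.mul_assoc]

theorem PosDef.isUnit_sqrt (hA : A.PosDef) : IsUnit hA.posSemidef.sqrt :=
  isUnit_of_mul_isUnit_left (hA.posSemidef.sqrt_mul_self ▸ hA.isUnit)

end Sqrt

section Range

variable {R : Type*} [CommSemiring R] [Fintype k] [Fintype l]

theorem mul_eq_of_range_mulVecLin_le [Fintype m] {Q : Matrix m m R} {A : Matrix m k R}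
    {B : Matrix m l R} (hQA : Q * A = A)
    (h : LinearMap.range B.mulVecLin ≤ LinearMap.range A.mulVecLin) : Q * B = B := by
  refine ext_iff_mulVec.mpr fun v => ?_
  obtain ⟨w, hw⟩ := h ⟨v, rfl⟩
  simp only [mulVecLin_apply] at hw
  rw [← mulVec_mulVec, ← hw, mulVec_mulVec, hQA]

theorem range_mulVecLin_mul_le (A : Matrix m k R) (X : Matrix k l R) :
    LinearMap.range (A * X).mulVecLin ≤ LinearMap.range A.mulVecLin := by
  rw [mulVecLin_mul]
  exact LinearMap.range_comp_le_range _ _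

theorem range_mulVecLin_mul_mono [Fintype n] (S : Matrix m n R) {H : Matrix n k R}
    {K : Matrix n l R} (h : LinearMap.range K.mulVecLin ≤ LinearMap.range H.mulVecLin) :
    LinearMap.range (S * K).mulVecLin ≤ LinearMap.range (S * H).mulVecLin := by
  simp only [mulVecLin_mul, LinearMap.range_comp]
  exact Submodule.map_mono h

end Range

section Projection

variable [Fintype m] [Fintype n]

theorem isStarProjection_of_isSymm {P : Matrix m m ℝ} (hPs : P.IsSymm) (hPi : P * P = P) :
    IsStarProjection P :=
  ⟨hPi, (conjTranspose_eq_transpose_of_trivial P).trans hPs⟩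

open scoped ComplexOrder in
theorem _root_.IsStarProjection.posSemidef {𝕜 : Type*} [RCLike 𝕜] {P : Matrix m m 𝕜}
    (hP : IsStarProjection P) : P.PosSemidef := by
  open scoped MatrixOrder in exact nonneg_iff_posSemidef.mp hP.nonneg

theorem mul_mul_transpose_mul_eq_self {A : Matrix m n ℝ} {G : Matrix n n ℝ}
    (hG : Aᵀ * A * G * (Aᵀ * A) = Aᵀ * A) : A * G * Aᵀ * A = A := by
  classical
  set E := G * (Aᵀ * A) - 1
  have hAE : Aᵀ * A * E = 0 := by
    rw [Matrix.mul_sub, ← Matrix.mul_assoc, hG, Matrix.mul_one, sub_self]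
  have h : (A * E)ᴴ * (A * E) = 0 := by
    rw [conjTranspose_eq_transpose_of_trivial, transpose_mul, Matrix.mul_assoc Eᵀ,
      ← Matrix.mul_assoc Aᵀ, hAE, Matrix.mul_zero]
  rw [conjTranspose_mul_self_eq_zero, Matrix.mul_sub, Matrix.mul_one, sub_eq_zero] at h
  simpa only [Matrix.mul_assoc] using h

theorem eq_mul_mul_transpose_of_range_eq {P : Matrix m m ℝ} {A : Matrix m n ℝ}
    {G : Matrix n n ℝ} (hPs : P.IsSymm) (hPi : P * P = P)
    (hrange : LinearMap.range P.mulVecLin = LinearMap.range A.mulVecLin)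
    (hG : Aᵀ * A * G * (Aᵀ * A) = Aᵀ * A) : P = A * G * Aᵀ := by
  have hP_eq : ∀ G' : Matrix n n ℝ, Aᵀ * A * G' * (Aᵀ * A) = Aᵀ * A → P = (A * G' * Aᵀ)ᵀ := by
    intro G' hG'
    have hQP : A * G' * Aᵀ * P = P :=
      mul_eq_of_range_mulVecLin_le (mul_mul_transpose_mul_eq_self hG') hrange.le
    have hPQ : P * (A * G' * Aᵀ)ᵀ = (A * G' * Aᵀ)ᵀ := by
      refine mul_eq_of_range_mulVecLin_le hPi (hrange ▸ ?_)
      simpa only [transpose_mul, transpose_transpose, Matrix.mul_assoc]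
        using range_mulVecLin_mul_le A (G'ᵀ * Aᵀ)
    calc P = Pᵀ := hPs.symm
      _ = P * (A * G' * Aᵀ)ᵀ := by rw [← hQP, transpose_mul, hPs, hQP]
      _ = (A * G' * Aᵀ)ᵀ := hPQ
  -- `Gᵀ` is again a generalized inverse of the symmetric matrix `AᵀA`.
  refine (hP_eq Gᵀ ?_).trans (by simp only [transpose_mul, transpose_transpose, Matrix.mul_assoc])
  simpa only [transpose_mul, transpose_transpose, Matrix.mul_assoc] using congrArg transpose hG

end Projection

theorem PosDef.mul_mul_transpose_eq_inv_sqrt_mul_mul [Fintype n] [DecidableEq n] [Fintype k]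
    {J : Matrix n n ℝ} (hJ : J.PosDef) {X : Matrix n k ℝ} {G : Matrix k k ℝ}
    (hG : Xᵀ * J * X * G * (Xᵀ * J * X) = Xᵀ * J * X) {P : Matrix n n ℝ}
    (hPs : P.IsSymm) (hPi : P * P = P)
    (hrange : LinearMap.range P.mulVecLin = LinearMap.range (hJ.posSemidef.sqrt * X).mulVecLin) :
    X * G * Xᵀ = hJ.posSemidef.sqrt⁻¹ * P * hJ.posSemidef.sqrt⁻¹ := by
  have hP := eq_mul_mul_transpose_of_range_eq hPs hPi hrange
    (by rwa [hJ.posSemidef.transpose_sqrt_mul_mul_sqrt_mul])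
  have hdet : IsUnit hJ.posSemidef.sqrt.det := (isUnit_iff_isUnit_det _).mp hJ.isUnit_sqrt
  rw [hP, transpose_mul, hJ.posSemidef.transpose_sqrt]
  simp only [← Matrix.mul_assoc, nonsing_inv_mul _ hdet, Matrix.one_mul]
  simp only [Matrix.mul_assoc, mul_nonsing_inv _ hdet, Matrix.mul_one]

end Matrix

/-- for `J` symmetric positive definite and `span(K) ⊆ span(H)`,
`H(HᵀJH)⁺Hᵀ − K(KᵀJK)⁺Kᵀ = J^{-1/2}(P_{J^{1/2}H} − P_{J^{1/2}K})J^{-1/2}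
= J^{-1/2} P_{J^{1/2}H} Q_{J^{1/2}K} J^{-1/2}`, and this difference is positive
semidefinite. Here `P_A` is the orthogonal projection (symmetric idempotent matrix)
onto the column space of `A`, and `⁺` the Moore–Penrose pseudoinverse. -/
theorem pseudoinverse_projection_difference {n a b : ℕ}
    (J : Matrix (Fin n) (Fin n) ℝ) (hJ : J.PosDef)
    (H : Matrix (Fin n) (Fin a) ℝ) (K : Matrix (Fin n) (Fin b) ℝ)
    (hspan : LinearMap.range K.mulVecLin ≤ LinearMap.range H.mulVecLin)
    (GH : Matrix (Fin a) (Fin a) ℝ) (hGH : IsMoorePenroseInv (Hᵀ * J * H) GH)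
    (GK : Matrix (Fin b) (Fin b) ℝ) (hGK : IsMoorePenroseInv (Kᵀ * J * K) GK)
    (PH PK : Matrix (Fin n) (Fin n) ℝ)
    (hPHsymm : PH.IsSymm) (hPHidem : PH * PH = PH)
    (hPHrange : LinearMap.range PH.mulVecLin =
      LinearMap.range (hJ.posSemidef.sqrt * H).mulVecLin)
    (hPKsymm : PK.IsSymm) (hPKidem : PK * PK = PK)
    (hPKrange : LinearMap.range PK.mulVecLin =
      LinearMap.range (hJ.posSemidef.sqrt * K).mulVecLin) :
    H * GH * Hᵀ - K * GK * Kᵀ =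
        (hJ.posSemidef.sqrt)⁻¹ * (PH - PK) * (hJ.posSemidef.sqrt)⁻¹ ∧
      H * GH * Hᵀ - K * GK * Kᵀ =
        (hJ.posSemidef.sqrt)⁻¹ * (PH * (1 - PK)) * (hJ.posSemidef.sqrt)⁻¹ ∧
      (H * GH * Hᵀ - K * GK * Kᵀ).PosSemidef := by
  set S := hJ.posSemidef.sqrt
  have hdiff : H * GH * Hᵀ - K * GK * Kᵀ = S⁻¹ * (PH - PK) * S⁻¹ := by
    rw [hJ.mul_mul_transpose_eq_inv_sqrt_mul_mul hGH.1 hPHsymm hPHidem hPHrange,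
      hJ.mul_mul_transpose_eq_inv_sqrt_mul_mul hGK.1 hPKsymm hPKidem hPKrange,
      Matrix.mul_sub, Matrix.sub_mul]
  have hPHPK : PH * PK = PK := mul_eq_of_range_mulVecLin_le hPHidem
    (by rw [hPKrange, hPHrange]; exact range_mulVecLin_mul_mono S hspan)
  refine ⟨hdiff, by rwa [Matrix.mul_sub, Matrix.mul_one, hPHPK], ?_⟩
  have hproj := (isStarProjection_of_isSymm hPKsymm hPKidem).sub_of_mul_eq_right
    (isStarProjection_of_isSymm hPHsymm hPHidem) hPHPK
  have hpsd := hproj.posSemidef.mul_mul_conjTranspose_same S⁻¹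
  rwa [conjTranspose_eq_transpose_of_trivial, transpose_nonsing_inv,
    hJ.posSemidef.transpose_sqrt, ← hdiff] at hpsd
end

section
/- If a random tensor Y ∈ ℝ^{r₁×⋯×r_m} has vec(Y) with covariance Σ_m ⊗ ⋯ ⊗ Σ₁ and for each k the subspace S_k reduces Σ_k with span(B_(k)) ⊆ S_k, then the Kronecker product subspace S_m ⊗ ⋯ ⊗ S₁ reduces Σ_m ⊗ ⋯ ⊗ Σ₁ and contains span(B_{(m+1)}ᵀ); hence the tensor envelope satisfies T_Σ(B) ⊆ E_{Σ_m}(B_(m)) ⊗ ⋯ ⊗ E_{Σ₁}(B_(1)). -/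
open Matrix

variable {ι : Type*} [Fintype ι] [DecidableEq ι]

/-- The orthogonal projection onto a subspace `R`, as a linear endomorphism. -/
noncomputable def projOnto (R : Submodule ℝ (EuclideanSpace ℝ ι)) :
    EuclideanSpace ℝ ι →ₗ[ℝ] EuclideanSpace ℝ ι :=
  (R.subtypeL.comp R.orthogonalProjectionOnto).toLinearMap

/-- `R` is a reducing subspace of the matrix `M`: `M = P_R M P_R + Q_R M Q_R`. -/
def IsReducingSubspace (M : Matrix ι ι ℝ) (R : Submodule ℝ (EuclideanSpace ℝ ι)) : Prop :=
  Matrix.toEuclideanLin M = (projOnto R) ∘ₗ (Matrix.toEuclideanLin M) ∘ₗ (projOnto R) +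
    (LinearMap.id - projOnto R) ∘ₗ (Matrix.toEuclideanLin M) ∘ₗ (LinearMap.id - projOnto R)

/-- The Kronecker product `S_m ⊗ ⋯ ⊗ S₁` of a family of subspaces: the span of all Kronecker
products `v_m ⊗ ⋯ ⊗ v₁` with `v_k ∈ S_k`, realized on the product index type. -/
def kronSub {m : ℕ} {r : Fin m → ℕ}
    (S : ∀ k, Submodule ℝ (EuclideanSpace ℝ (Fin (r k)))) :
    Submodule ℝ (EuclideanSpace ℝ (∀ k, Fin (r k))) :=
  Submodule.span ℝ {w | ∃ v : ∀ k, EuclideanSpace ℝ (Fin (r k)),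
    (∀ k, v k ∈ S k) ∧ w = WithLp.toLp 2 (fun i => ∏ k, v k (i k))}

/-- The Kronecker product `Σ_m ⊗ ⋯ ⊗ Σ₁` of a family of square matrices, realized on the
product index type. -/
def kronFamily {m : ℕ} {r : Fin m → ℕ} (A : ∀ k, Matrix (Fin (r k)) (Fin (r k)) ℝ) :
    Matrix (∀ k, Fin (r k)) (∀ k, Fin (r k)) ℝ :=
  fun i j => ∏ k, A k (i k) (j k)

/-- The span of the mode-`k` fibers of the tensor `B` (i.e. `span(B_(k))`). -/
def modeSpan {m p : ℕ} {r : Fin m → ℕ} (B : (∀ k, Fin (r k)) → Fin p → ℝ) (k : Fin m) :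
    Submodule ℝ (EuclideanSpace ℝ (Fin (r k))) :=
  Submodule.span ℝ {w | ∃ (i : ∀ k', Fin (r k')) (ip : Fin p),
    w = fun a => B (Function.update i k a) ip}

/-! A subspace reduces a symmetric matrix exactly when it is invariant under it, and
`Σ_m ⊗ ⋯ ⊗ Σ₁` acts factorwise on elementary tensors, so it preserves `S_m ⊗ ⋯ ⊗ S₁` when each
`Σ_k` preserves `S_k`. A column `b` of `B_{(m+1)}ᵀ` has all its mode-`k` fibers in
`span(B_(k)) ⊆ S_k`, so projecting onto `S_k` in mode `k` fixes `b`; doing this one mode at a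
time carries `b` from the whole space into `S_m ⊗ ⋯ ⊗ S₁`. The envelopes `E_{Σ_k}(B_(k))` are
themselves reducing and contain `span(B_(k))`, so `E_m ⊗ ⋯ ⊗ E₁` is one of the subspaces
intersected in `T_Σ(B)`. -/

theorem IsIdempotentElem.commute_iff_eq_pinching {R : Type*} [Ring R] {p a : R}
    (hp : IsIdempotentElem p) : Commute p a ↔ a = p * a * p + (1 - p) * a * (1 - p) := by
  constructor
  · intro h
    have h' : Commute (1 - p) a := (Commute.one_left a).sub_left h
    rw [h.eq, h'.eq, mul_assoc, mul_assoc, hp.eq, hp.one_sub.eq, ← mul_add, add_sub_cancel,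
      mul_one]
  · intro h
    have hpa : p * a = p * a * p := by
      conv_lhs => rw [h]
      rw [mul_add, ← mul_assoc, ← mul_assoc, ← mul_assoc, ← mul_assoc, hp.eq,
        hp.mul_one_sub_self, zero_mul, zero_mul, add_zero]
    have hap : a * p = p * a * p := by
      conv_lhs => rw [h]
      rw [add_mul, mul_assoc _ p p, hp.eq, mul_assoc _ (1 - p) p, hp.one_sub_mul_self, mul_zero,
        add_zero]
    exact hpa.trans hap.symm

theorem prod_eq_mul_prod_compl_of_forall_ne {α M : Type*} [Fintype α] [DecidableEq α]
    [CommMonoid M] {f g : α → M} (a : α) (h : ∀ b ≠ a, f b = g b) :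
    ∏ b, f b = f a * ∏ b ∈ {a}ᶜ, g b :=
  (Fintype.prod_eq_mul_prod_compl a f).trans <|
    congrArg _ <| Finset.prod_congr rfl fun b hb => h b (by simpa using hb)

theorem Module.End.sInf_mem_invtSubmodule {R M : Type*} [Semiring R] [AddCommMonoid M]
    [Module R M] {f : Module.End R M} {s : Set (Submodule R M)} (hs : s ⊆ f.invtSubmodule) :
    sInf s ∈ f.invtSubmodule := fun _ hx =>
  Submodule.mem_sInf.2 fun p hp => hs hp (Submodule.mem_sInf.1 hx p hp)

theorem isIdempotentElem_projOnto {n : Type*} [Fintype n] (R : Submodule ℝ (EuclideanSpace ℝ n)) :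
    IsIdempotentElem (projOnto R) :=
  ContinuousLinearMap.IsIdempotentElem.toLinearMap R.isIdempotentElem_starProjection

theorem isReducingSubspace_iff_commute (M : Matrix ι ι ℝ)
    (R : Submodule ℝ (EuclideanSpace ℝ ι)) :
    IsReducingSubspace M R ↔ Commute (projOnto R) (Matrix.toEuclideanLin M) := by
  rw [(isIdempotentElem_projOnto R).commute_iff_eq_pinching, IsReducingSubspace]
  simp only [Module.End.mul_eq_comp, Module.End.one_eq_id, LinearMap.comp_assoc]

theorem Matrix.IsHermitian.isReducingSubspace_iff {M : Matrix ι ι ℝ} (hM : M.IsHermitian)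
    (R : Submodule ℝ (EuclideanSpace ℝ ι)) :
    IsReducingSubspace M R ↔ R ∈ Module.End.invtSubmodule (Matrix.toEuclideanLin M) := by
  have hrange : LinearMap.range (projOnto R) = R := R.range_starProjection
  have hker : LinearMap.ker (projOnto R) = Rᗮ := R.ker_starProjection
  rw [isReducingSubspace_iff_commute,
    LinearMap.IsIdempotentElem.commute_iff (isIdempotentElem_projOnto R), hrange, hker]
  exact ⟨And.left, fun h => ⟨h,
    (Matrix.isSymmetric_toEuclideanLin_iff.2 hM).orthogonalComplement_mem_invtSubmodule h⟩⟩

theorem Matrix.IsHermitian.isReducingSubspace_sInf {M : Matrix ι ι ℝ} (hM : M.IsHermitian)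
    {s : Set (Submodule ℝ (EuclideanSpace ℝ ι))} (hs : ∀ R ∈ s, IsReducingSubspace M R) :
    IsReducingSubspace M (sInf s) :=
  (hM.isReducingSubspace_iff _).2 <|
    Module.End.sInf_mem_invtSubmodule fun R hR => (hM.isReducingSubspace_iff R).1 (hs R hR)

section Kronecker

variable {m : ℕ} {r : Fin m → ℕ}

def kronVec (v : ∀ k, EuclideanSpace ℝ (Fin (r k))) : EuclideanSpace ℝ (∀ k, Fin (r k)) :=
  WithLp.toLp 2 fun i => ∏ k, v k (i k)

@[simp]
theorem kronVec_apply (v : ∀ k, EuclideanSpace ℝ (Fin (r k))) (i : ∀ k, Fin (r k)) :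
    kronVec v i = ∏ k, v k (i k) :=
  rfl

theorem kronSub_le_iff {S : ∀ k, Submodule ℝ (EuclideanSpace ℝ (Fin (r k)))}
    {N : Submodule ℝ (EuclideanSpace ℝ (∀ k, Fin (r k)))} :
    kronSub S ≤ N ↔ ∀ v, (∀ k, v k ∈ S k) → kronVec v ∈ N := by
  rw [kronSub, Submodule.span_le]
  exact ⟨fun h v hv => h ⟨v, hv, rfl⟩, fun h _ ⟨v, hv, hw⟩ => hw ▸ h v hv⟩

theorem kronVec_mem_kronSub {S : ∀ k, Submodule ℝ (EuclideanSpace ℝ (Fin (r k)))}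
    {v : ∀ k, EuclideanSpace ℝ (Fin (r k))} (hv : ∀ k, v k ∈ S k) : kronVec v ∈ kronSub S :=
  Submodule.subset_span ⟨v, hv, rfl⟩

theorem kronVec_single (i : ∀ k, Fin (r k)) :
    kronVec (fun k => EuclideanSpace.single (i k) (1 : ℝ)) = EuclideanSpace.single i 1 := by
  ext j
  simp [kronVec, Finset.prod_boole, funext_iff]

theorem kronSub_top :
    kronSub (fun k => (⊤ : Submodule ℝ (EuclideanSpace ℝ (Fin (r k))))) = ⊤ := by
  rw [eq_top_iff, ← (EuclideanSpace.basisFun (∀ k, Fin (r k)) ℝ).toBasis.span_eq,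
    Submodule.span_le]
  rintro _ ⟨i, rfl⟩
  simpa [← kronVec_single] using kronVec_mem_kronSub fun k => Submodule.mem_top

theorem kronFamily_isHermitian {A : ∀ k, Matrix (Fin (r k)) (Fin (r k)) ℝ}
    (hA : ∀ k, (A k).IsHermitian) : (kronFamily A).IsHermitian :=
  Matrix.IsHermitian.ext fun i j => by
    simpa [kronFamily] using Finset.prod_congr rfl fun k _ => (hA k).apply (i k) (j k)

theorem toEuclideanLin_kronFamily_kronVec (A : ∀ k, Matrix (Fin (r k)) (Fin (r k)) ℝ)
    (v : ∀ k, EuclideanSpace ℝ (Fin (r k))) :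
    Matrix.toEuclideanLin (kronFamily A) (kronVec v) =
      kronVec fun k => Matrix.toEuclideanLin (A k) (v k) := by
  ext i
  simp only [kronVec, Matrix.ofLp_toLpLin, Matrix.toLin'_apply, Matrix.mulVec, dotProduct,
    kronFamily, Finset.prod_univ_sum, Fintype.piFinset_univ, ← Finset.prod_mul_distrib]

theorem kronSub_mem_invtSubmodule {A : ∀ k, Matrix (Fin (r k)) (Fin (r k)) ℝ}
    {S : ∀ k, Submodule ℝ (EuclideanSpace ℝ (Fin (r k)))}
    (hS : ∀ k, S k ∈ Module.End.invtSubmodule (Matrix.toEuclideanLin (A k))) :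
    kronSub S ∈ Module.End.invtSubmodule (Matrix.toEuclideanLin (kronFamily A)) :=
  kronSub_le_iff.2 fun v hv => by
    rw [Submodule.mem_comap, toEuclideanLin_kronFamily_kronVec]
    exact kronVec_mem_kronSub fun k => hS k (hv k)

def modeFiber (k : Fin m) (i : ∀ l, Fin (r l)) :
    EuclideanSpace ℝ (∀ l, Fin (r l)) →ₗ[ℝ] EuclideanSpace ℝ (Fin (r k)) where
  toFun x := WithLp.toLp 2 fun a => x (Function.update i k a)
  map_add' _ _ := by ext; simp
  map_smul' _ _ := by ext; simp

@[simp]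
theorem modeFiber_apply (k : Fin m) (i : ∀ l, Fin (r l)) (x : EuclideanSpace ℝ (∀ l, Fin (r l)))
    (a : Fin (r k)) : modeFiber k i x a = x (Function.update i k a) :=
  rfl

/-- The mode-`k` product `x ×_k N`. -/
def modeMul (k : Fin m) (N : Module.End ℝ (EuclideanSpace ℝ (Fin (r k)))) :
    Module.End ℝ (EuclideanSpace ℝ (∀ l, Fin (r l))) where
  toFun x := WithLp.toLp 2 fun i => N (modeFiber k i x) (i k)
  map_add' x y := by ext i; simp
  map_smul' c x := by ext i; simp

@[simp]
theorem modeMul_apply (k : Fin m) (N : Module.End ℝ (EuclideanSpace ℝ (Fin (r k))))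
    (x : EuclideanSpace ℝ (∀ l, Fin (r l))) (i : ∀ l, Fin (r l)) :
    modeMul k N x i = N (modeFiber k i x) (i k) :=
  rfl

theorem modeFiber_kronVec (k : Fin m) (i : ∀ l, Fin (r l))
    (v : ∀ l, EuclideanSpace ℝ (Fin (r l))) :
    modeFiber k i (kronVec v) = (∏ l ∈ {k}ᶜ, v l (i l)) • v k := by
  ext a
  rw [modeFiber_apply, PiLp.smul_apply, smul_eq_mul, mul_comm, kronVec_apply,
    prod_eq_mul_prod_compl_of_forall_ne k fun l hl => by rw [Function.update_of_ne hl],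
    Function.update_self]

theorem modeMul_kronVec (k : Fin m) (N : Module.End ℝ (EuclideanSpace ℝ (Fin (r k))))
    (v : ∀ l, EuclideanSpace ℝ (Fin (r l))) :
    modeMul k N (kronVec v) = kronVec (Function.update v k (N (v k))) := by
  ext i
  rw [modeMul_apply, modeFiber_kronVec, map_smul, PiLp.smul_apply, smul_eq_mul, mul_comm,
    kronVec_apply,
    prod_eq_mul_prod_compl_of_forall_ne k fun l hl => by rw [Function.update_of_ne hl],
    Function.update_self]

theorem kronSub_le_comap_modeMul {k : Fin m} {N : Module.End ℝ (EuclideanSpace ℝ (Fin (r k)))}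
    {T T' : ∀ l, Submodule ℝ (EuclideanSpace ℝ (Fin (r l)))} (hN : ∀ x, N x ∈ T' k)
    (hT : ∀ l ≠ k, T l ≤ T' l) : kronSub T ≤ (kronSub T').comap (modeMul k N) :=
  kronSub_le_iff.2 fun v hv => by
    rw [Submodule.mem_comap, modeMul_kronVec]
    refine kronVec_mem_kronSub fun l => ?_
    rcases eq_or_ne l k with rfl | hl
    · simpa using hN (v l)
    · simpa [hl] using hT l hl (hv l)

theorem modeMul_eq_self {k : Fin m} {N : Module.End ℝ (EuclideanSpace ℝ (Fin (r k)))}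
    {x : EuclideanSpace ℝ (∀ l, Fin (r l))} (hx : ∀ i, N (modeFiber k i x) = modeFiber k i x) :
    modeMul k N x = x := by
  ext i
  rw [modeMul_apply, hx, modeFiber_apply, Function.update_eq_self]

theorem mem_kronSub_of_modeFiber_mem {S : ∀ k, Submodule ℝ (EuclideanSpace ℝ (Fin (r k)))}
    {x : EuclideanSpace ℝ (∀ l, Fin (r l))} (hx : ∀ k i, modeFiber k i x ∈ S k) :
    x ∈ kronSub S := by
  suffices ∀ F : Finset (Fin m), x ∈ kronSub (F.piecewise S fun _ => ⊤) by
    simpa using this Finset.univ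
  intro F
  induction F using Finset.induction_on with
  | empty => simp [kronSub_top]
  | insert k F _ ih =>
    have hfix : modeMul k (projOnto (S k)) x = x :=
      modeMul_eq_self fun i => (S k).starProjection_eq_self_iff.2 (hx k i)
    rw [← hfix]
    refine kronSub_le_comap_modeMul (fun y => ?_) (fun l hl => ?_) ih
    · rw [Finset.piecewise_insert_self]
      exact (S k).starProjection_apply_mem y
    · rw [Finset.piecewise_insert_of_ne (h := hl)]

theorem kronSub_isReducingSubspace {A : ∀ k, Matrix (Fin (r k)) (Fin (r k)) ℝ}
    (hA : ∀ k, (A k).IsHermitian) {S : ∀ k, Submodule ℝ (EuclideanSpace ℝ (Fin (r k)))}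
    (hS : ∀ k, IsReducingSubspace (A k) (S k)) :
    IsReducingSubspace (kronFamily A) (kronSub S) :=
  (kronFamily_isHermitian hA).isReducingSubspace_iff _ |>.2 <|
    kronSub_mem_invtSubmodule fun k => (hA k).isReducingSubspace_iff _ |>.1 (hS k)

theorem col_mem_kronSub {p : ℕ} {B : (∀ k, Fin (r k)) → Fin p → ℝ}
    {S : ∀ k, Submodule ℝ (EuclideanSpace ℝ (Fin (r k)))} (hS : ∀ k, modeSpan B k ≤ S k)
    (ip : Fin p) : WithLp.toLp 2 (fun i => B i ip) ∈ kronSub S :=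
  mem_kronSub_of_modeFiber_mem fun k i => hS k (Submodule.subset_span ⟨i, ip, rfl⟩)

end Kronecker

/-- if for each `k` the subspace `S_k` reduces `Σ_k` and contains
`span(B_(k))`, then `S_m ⊗ ⋯ ⊗ S₁` reduces `Σ_m ⊗ ⋯ ⊗ Σ₁` and contains
`span(B_{(m+1)}ᵀ)`; hence the tensor envelope `T_Σ(B)` (the intersection of all such
Kronecker-product reducing subspaces containing `span(B_{(m+1)}ᵀ)`) satisfies
`T_Σ(B) ⊆ E_{Σ_m}(B_(m)) ⊗ ⋯ ⊗ E_{Σ₁}(B_(1))`. -/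
theorem tensor_envelope_subset {m p : ℕ} {r : Fin m → ℕ}
    (Sig : ∀ k, Matrix (Fin (r k)) (Fin (r k)) ℝ)
    (hSig : ∀ k, (Sig k).PosDef)
    (B : (∀ k, Fin (r k)) → Fin p → ℝ)
    (S : ∀ k, Submodule ℝ (EuclideanSpace ℝ (Fin (r k))))
    (hred : ∀ k, IsReducingSubspace (Sig k) (S k))
    (hspan : ∀ k, modeSpan B k ≤ S k) :
    IsReducingSubspace (kronFamily Sig) (kronSub S) ∧
    (∀ ip : Fin p, WithLp.toLp 2 (fun i => B i ip) ∈ kronSub S) ∧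
    (⨅ (E : ∀ k, Submodule ℝ (EuclideanSpace ℝ (Fin (r k))))
        (_ : IsReducingSubspace (kronFamily Sig) (kronSub E) ∧
          ∀ ip : Fin p, WithLp.toLp 2 (fun i => B i ip) ∈ kronSub E),
        kronSub E) ≤
      kronSub (fun k =>
        sInf {R | IsReducingSubspace (Sig k) R ∧ modeSpan B k ≤ R}) := by
  have hSigH : ∀ k, (Sig k).IsHermitian := fun k => (hSig k).isHermitian
  set E := fun k => sInf {R | IsReducingSubspace (Sig k) R ∧ modeSpan B k ≤ R}
  have hEred : ∀ k, IsReducingSubspace (Sig k) (E k) :=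
    fun k => (hSigH k).isReducingSubspace_sInf fun _ hR => hR.1
  have hEspan : ∀ k, modeSpan B k ≤ E k := fun k => le_sInf fun _ hR => hR.2
  exact ⟨kronSub_isReducingSubspace hSigH hred, col_mem_kronSub hspan,
    iInf₂_le E ⟨kronSub_isReducingSubspace hSigH hEred, col_mem_kronSub hEspan⟩⟩
end
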